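/- arXiv:1905.08088 — 5 statements merged into one kernel-verified Lean document; each statement's English description precedes it below -/
import Mathlib

section
/- Let n > n_ex ≥ 2 be integers, s ≥ 2, 1/s < p_ex ≤ 1, r = (s/(s-1))·(p_ex - 1/s)^2 + 1/s, δ = (p_ex - 1/s)^2 / n^2, and ρ = (C(n,2) - C(n_ex,2))·(1/s) + C(n_ex,2)·r. Then r - ρ/C(n,2) > 2δ. -/
/-! The gap `r - ρ/C(n,2)` is the fraction `(C(n,2) - C(nₑₓ,2)) / C(n,2)` of `r - 1/s`.
Since `C(n,2) - C(nₑₓ,2) ≥ C(n,2) - C(n-1,2) = n - 1`, that fraction is at least `2/n`, while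
`r - 1/s = s/(s-1) · (pₑₓ - 1/s)² > (pₑₓ - 1/s)²`; so the gap exceeds `2 (pₑₓ - 1/s)² / n ≥ 2δ`. -/

lemma Nat.choose_two_add_sub_one_le {m n : ℕ} (h : m < n) :
    m.choose 2 + (n - 1) ≤ n.choose 2 := by
  obtain ⟨k, rfl⟩ : ∃ k, n = k + 1 := ⟨n - 1, by omega⟩
  have hmk := Nat.choose_le_choose 2 (Nat.le_of_lt_succ h)
  rw [Nat.choose_succ_succ', Nat.choose_one_right, Nat.add_sub_cancel]
  exact (Nat.add_le_add_right hmk k).trans_eq (add_comm _ _)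

lemma two_div_le_choose_two_sub_div {m n : ℕ} (hmn : m < n) (hn : 2 ≤ n) :
    2 / (n : ℝ) ≤ ((n.choose 2 : ℝ) - m.choose 2) / n.choose 2 := by
  have hn1 : (n : ℝ) - 1 ≠ 0 := by
    have : (2 : ℝ) ≤ n := by exact_mod_cast hn
    linarith
  have hsub : (n : ℝ) - 1 ≤ (n.choose 2 : ℝ) - m.choose 2 := by
    have h := Nat.choose_two_add_sub_one_le hmn
    rw [← Nat.cast_le (α := ℝ), Nat.cast_add, Nat.cast_pred (by omega)] at h
    linarith
  calc 2 / (n : ℝ) = ((n : ℝ) - 1) / n.choose 2 := by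
        rw [Nat.cast_choose_two]
        field_simp
    _ ≤ _ := by gcongr

lemma sub_div_eq_of_eq_weighted_sum {K : Type*} [Field K] {N M a b ρ : K} (hN : N ≠ 0)
    (hρ : ρ = (N - M) * a + M * b) : b - ρ / N = (N - M) / N * (b - a) := by
  subst hρ
  field_simp
  ring

theorem stmt4_general (n nex s : ℕ) (h1 : 2 ≤ nex) (h2 : nex < n) (hs : 2 ≤ s)
    (pex : ℝ) (hp : 1 / (s : ℝ) < pex)
    (r δ ρ : ℝ)
    (hr : r = ((s : ℝ) / ((s : ℝ) - 1)) * (pex - 1 / s) ^ 2 + 1 / s)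
    (hδ : δ = (pex - 1 / s) ^ 2 / (n : ℝ) ^ 2)
    (hρ : ρ = ((n.choose 2 : ℝ) - (nex.choose 2 : ℝ)) * (1 / s) + (nex.choose 2 : ℝ) * r) :
    r - ρ / (n.choose 2 : ℝ) > 2 * δ := by
  set q := (pex - 1 / (s : ℝ)) ^ 2
  have hq : 0 < q := pow_pos (sub_pos.2 hp) 2
  have hn : 2 ≤ n := by omega
  have hn' : (1 : ℝ) ≤ n := by exact_mod_cast (by omega : 1 ≤ n)
  have hs' : (1 : ℝ) < s := by exact_mod_cast hs
  have hgap : q < r - 1 / s := by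
    rw [hr, add_sub_cancel_right]
    exact lt_mul_of_one_lt_left hq ((one_lt_div (by linarith)).2 (by linarith))
  have hN : (n.choose 2 : ℝ) ≠ 0 := by exact_mod_cast (Nat.choose_pos hn).ne'
  rw [sub_div_eq_of_eq_weighted_sum hN hρ, hδ]
  calc 2 * (q / (n : ℝ) ^ 2) = 2 / n * (q / n) := by ring
    _ ≤ 2 / n * q := by gcongr; exact div_le_self hq.le hn'
    _ < 2 / n * (r - 1 / s) := by gcongr
    _ ≤ _ := mul_le_mul_of_nonneg_right (two_div_le_choose_two_sub_div h2 hn) (by linarith)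

/-- Separation of r above the average agreement probability ρ/C(n,2). -/
theorem stmt4 (n nex s : ℕ) (h1 : 2 ≤ nex) (h2 : nex < n) (hs : 2 ≤ s)
    (pex : ℝ) (hp : 1 / (s : ℝ) < pex) (hp1 : pex ≤ 1)
    (r δ ρ : ℝ)
    (hr : r = ((s : ℝ) / ((s : ℝ) - 1)) * (pex - 1 / s) ^ 2 + 1 / s)
    (hδ : δ = (pex - 1 / s) ^ 2 / (n : ℝ) ^ 2)
    (hρ : ρ = ((n.choose 2 : ℝ) - (nex.choose 2 : ℝ)) * (1 / s) + (nex.choose 2 : ℝ) * r) :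
    r - ρ / (n.choose 2 : ℝ) > 2 * δ :=
  stmt4_general n nex s h1 h2 hs pex hp r δ ρ hr hδ hρ
end

section
/- Let n > n_ex ≥ 2 be integers, s ≥ 2, 1/s < p_ex ≤ 1, r = (s/(s-1))·(p_ex - 1/s)^2 + 1/s, δ = (p_ex - 1/s)^2 / n^2, and ρ = (C(n,2) - C(n_ex,2))·(1/s) + C(n_ex,2)·r. Then ρ/C(n,2) - 1/s > 2δ. -/
/-!
Since `ρ` mixes `C(n,2) - C(n_ex,2)` pairs of agreement probability `1/s` with `C(n_ex,2)` pairs of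
probability `r`, the excess `ρ/C(n,2) - 1/s` equals `C(n_ex,2)/C(n,2) · s/(s-1) · (p_ex - 1/s)^2`.
Both `C(n_ex,2)` and `s/(s-1)` are at least `1`, and `C(n,2) = n(n-1)/2 < n^2/2`.
-/

theorem two_div_sq_lt_one_div_choose_two {n : ℕ} (hn : 2 ≤ n) :
    2 / (n : ℝ) ^ 2 < 1 / (n.choose 2 : ℝ) := by
  have hnR : (2 : ℝ) ≤ n := by exact_mod_cast hn
  rw [Nat.cast_choose_two, div_lt_div_iff₀ (by positivity) (by nlinarith)]
  nlinarith

theorem stmt5_general (n nex s : ℕ) (h1 : 2 ≤ nex) (h2 : nex < n) (hs : 2 ≤ s)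
    (pex : ℝ) (hp : 1 / (s : ℝ) < pex)
    (r δ ρ : ℝ)
    (hr : r = ((s : ℝ) / ((s : ℝ) - 1)) * (pex - 1 / s) ^ 2 + 1 / s)
    (hδ : δ = (pex - 1 / s) ^ 2 / (n : ℝ) ^ 2)
    (hρ : ρ = ((n.choose 2 : ℝ) - (nex.choose 2 : ℝ)) * (1 / s) + (nex.choose 2 : ℝ) * r) :
    ρ / (n.choose 2 : ℝ) - 1 / s > 2 * δ := by
  set q := pex - 1 / (s : ℝ)
  have hsR : (2 : ℝ) ≤ s := by exact_mod_cast hs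
  have hq : 0 < q ^ 2 := pow_pos (sub_pos.2 hp) 2
  have hCn : 0 < (n.choose 2 : ℝ) := by exact_mod_cast Nat.choose_pos (by omega)
  have hCex : (1 : ℝ) ≤ nex.choose 2 := by exact_mod_cast Nat.choose_pos h1
  have hsfac : 1 ≤ (s : ℝ) / ((s : ℝ) - 1) := by rw [one_le_div (by linarith)]; linarith
  have hexcess : ρ / (n.choose 2 : ℝ) - 1 / s
      = (nex.choose 2 : ℝ) / n.choose 2 * ((s : ℝ) / ((s : ℝ) - 1) * q ^ 2) := by
    rw [hρ, hr]
    field_simp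
    ring
  rw [hexcess, hδ, gt_iff_lt]
  calc 2 * (q ^ 2 / (n : ℝ) ^ 2) = 2 / (n : ℝ) ^ 2 * q ^ 2 := by ring
    _ < 1 / (n.choose 2 : ℝ) * q ^ 2 := 
      mul_lt_mul_of_pos_right (two_div_sq_lt_one_div_choose_two (by omega)) hq
    _ ≤ (nex.choose 2 : ℝ) / n.choose 2 * ((s : ℝ) / ((s : ℝ) - 1) * q ^ 2) := by
      gcongr
      exact le_mul_of_one_le_left hq.le hsfac

/-- Separation of the average agreement probability ρ/C(n,2) above 1/s. -/
theorem stmt5 (n nex s : ℕ) (h1 : 2 ≤ nex) (h2 : nex < n) (hs : 2 ≤ s)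
    (pex : ℝ) (hp : 1 / (s : ℝ) < pex) (hp1 : pex ≤ 1)
    (r δ ρ : ℝ)
    (hr : r = ((s : ℝ) / ((s : ℝ) - 1)) * (pex - 1 / s) ^ 2 + 1 / s)
    (hδ : δ = (pex - 1 / s) ^ 2 / (n : ℝ) ^ 2)
    (hρ : ρ = ((n.choose 2 : ℝ) - (nex.choose 2 : ℝ)) * (1 / s) + (nex.choose 2 : ℝ) * r) :
    ρ / (n.choose 2 : ℝ) - 1 / s > 2 * δ :=
  stmt5_general n nex s h1 h2 hs pex hp r δ ρ hr hδ hρ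
end

section
/- Suppose n workers all independently answer a question with s candidate answers, each giving the correct answer with probability p_ex > 1/s and otherwise a uniform wrong answer. If n ≥ 2·log(2s/ε)/(p_ex - 1/s)² for some ε > 0, then the majority-vote answer equals the correct answer with probability at least 1 - ε. -/
private lemma stmt8_aux (q pex δ u E : ℝ) (hq0 : 0 ≤ q) (hpq : δ ≤ pex - q)
    (hr : 0 ≤ 1 - pex - q) (hδ0 : 0 < δ) (hδ1 : δ < 1) (hu1 : 1 ≤ u)
    (hu2 : u ^ 2 * (1 - δ) = 1 + δ) (hEb : u * (1 - δ) ≤ E) :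
    1 + q * (u - 1) + pex * (u⁻¹ - 1) ≤ E := by
  have hu0 : (0:ℝ) < u := lt_of_lt_of_le one_pos hu1
  have hmul : u * (1 + q * (u - 1) + pex * (u⁻¹ - 1)) ≤ u * (u * (1 - δ)) := by
    have hlhs : u * (1 + q * (u - 1) + pex * (u⁻¹ - 1))
        = u + q * u * (u - 1) + pex * (1 - u) := by
      field_simp
    rw [hlhs]
    nlinarith [mul_nonneg (sub_nonneg.mpr hpq) (by nlinarith : (0:ℝ) ≤ u ^ 2 - 1),
      mul_nonneg hr (sq_nonneg (u - 1))]
  have h6 := (mul_le_mul_iff_right₀ hu0).mp hmul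
  linarith


open scoped Classical in
/-- If all n workers are experts and n ≥ 2 log(2s/ε)/(p_ex-1/s)², the majority vote is
correct with probability at least 1-ε. -/
theorem stmt8 (n s : ℕ) (hs : 2 ≤ s) (pex ε : ℝ) (hp : 1 / (s : ℝ) < pex) (hp1 : pex ≤ 1)
    (hε : 0 < ε)
    (hn : 2 * Real.log (2 * (s : ℝ) / ε) / (pex - 1 / s) ^ 2 ≤ (n : ℝ))
    (a : Fin s) (f : Fin s → ℝ)
    (hf : ∀ c, f c = if c = a then pex else (1 - pex) / ((s : ℝ) - 1)) :
    1 - ε ≤ ∑ ω : Fin n → Fin s,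
      (if ∀ c : Fin s, c ≠ a →
            (Finset.univ.filter (fun i => ω i = c)).card <
              (Finset.univ.filter (fun i => ω i = a)).card
        then ∏ i, f (ω i) else 0) := by
  have hs2 : (2:ℝ) ≤ (s:ℝ) := by exact_mod_cast hs
  have hs0 : (0:ℝ) < s := by linarith
  have hs1 : (0:ℝ) < (s:ℝ) - 1 := by linarith
  set q : ℝ := (1 - pex) / ((s:ℝ) - 1) with hqdef
  have hpex0 : (0:ℝ) < pex := lt_trans (by positivity) hp
  have hq0 : 0 ≤ q := div_nonneg (by linarith) hs1.le
  set δ : ℝ := pex - 1/(s:ℝ) with hδdef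
  have hδ0 : 0 < δ := by simp only [hδdef]; linarith
  have hδ1 : δ < 1 := by
    have h1 : (0:ℝ) < 1/(s:ℝ) := by positivity
    simp only [hδdef]; linarith
  have hspex : 1 < pex * (s:ℝ) := by
    have := (div_lt_iff₀ hs0).mp hp
    linarith
  have hpq : δ ≤ pex - q := by
    have hq : q ≤ 1/(s:ℝ) := by
      rw [hqdef, div_le_div_iff₀ hs1 hs0]
      nlinarith
    simp only [hδdef]; linarith
  have hr : 0 ≤ 1 - pex - q := by
    have : q ≤ 1 - pex := by
      rw [hqdef]
      calc (1 - pex) / ((s:ℝ) - 1) ≤ (1 - pex) / 1 :=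
            div_le_div_of_nonneg_left (by linarith) one_pos (by linarith)
        _ = 1 - pex := div_one _
    linarith
  -- the tilt parameter
  have h1δ : 0 < 1 - δ := by linarith
  set u : ℝ := Real.sqrt ((1+δ)/(1-δ)) with hudef
  have hx1 : 1 ≤ (1+δ)/(1-δ) := by rw [le_div_iff₀ h1δ]; linarith
  have hu1 : 1 ≤ u := Real.one_le_sqrt.mpr hx1
  have hu0 : 0 < u := lt_of_lt_of_le one_pos hu1
  have hu2 : u^2 * (1-δ) = 1 + δ := by
    rw [hudef, Real.sq_sqrt (by positivity)]
    field_simp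
  set E : ℝ := Real.exp (-δ^2/2) with hEdef
  have hE0 : 0 < E := Real.exp_pos _
  have hEbound : u * (1-δ) ≤ E := by
    have h1 : (u*(1-δ))^2 = 1 - δ^2 := by
      calc (u*(1-δ))^2 = u^2*(1-δ)*(1-δ) := by ring
        _ = (1+δ)*(1-δ) := by rw [hu2]
        _ = 1 - δ^2 := by ring
    have h2 : 1 - δ^2 ≤ Real.exp (-δ^2) := by
      have := Real.add_one_le_exp (-δ^2); linarith
    have h3 : E^2 = Real.exp (-δ^2) := by
      rw [hEdef, ← Real.exp_nat_mul]
      congr 1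
      push_cast
      ring
    have h4 : (u*(1-δ))^2 ≤ E^2 := by rw [h1, h3]; exact h2
    have h5 : 0 ≤ u * (1-δ) := mul_nonneg hu0.le h1δ.le
    exact (pow_le_pow_iff_left₀ h5 hE0.le two_ne_zero).mp h4
  -- E^n ≤ ε/(2s)
  have hEn : E^n ≤ ε / (2*(s:ℝ)) := by
    have hpos : (0:ℝ) < ε / (2*(s:ℝ)) := by positivity
    have hδ2 : (0:ℝ) < δ^2 := by positivity
    have hlog : 2 * Real.log (2*(s:ℝ)/ε) ≤ (n:ℝ) * δ^2 := by
      rw [div_le_iff₀ hδ2] at hn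
      simpa [hδdef] using hn
    have hloginv : Real.log (2*(s:ℝ)/ε) = - Real.log (ε/(2*(s:ℝ))) := by
      rw [← Real.log_inv]
      congr 1
      field_simp
    have hkey : (n:ℝ) * (-δ^2/2) ≤ Real.log (ε/(2*(s:ℝ))) := by
      rw [hloginv] at hlog; nlinarith
    calc E^n = Real.exp ((n:ℝ) * (-δ^2/2)) := by
          rw [hEdef, ← Real.exp_nat_mul]
      _ ≤ Real.exp (Real.log (ε/(2*(s:ℝ)))) := Real.exp_le_exp.mpr hkey
      _ = ε/(2*(s:ℝ)) := Real.exp_log hpos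
  -- probabilities
  have hf0 : ∀ x, 0 ≤ f x := by
    intro x; rw [hf x]
    split
    · linarith
    · exact hq0
  have hfa : f a = pex := by rw [hf a]; simp
  set P : (Fin n → Fin s) → ℝ := fun ω => ∏ i, f (ω i) with hPdef
  have hP0 : ∀ ω, 0 ≤ P ω := fun ω => Finset.prod_nonneg fun i _ => hf0 _
  have hprodsum : ∀ g : Fin s → ℝ,
      ∑ ω : Fin n → Fin s, ∏ i, g (ω i) = (∑ x : Fin s, g x)^n := by
    intro g
    have h := Finset.prod_univ_sum (fun _ : Fin n => (Finset.univ : Finset (Fin s)))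
      (fun _ x => g x)
    rw [Fintype.piFinset_univ] at h
    rw [← h, Finset.prod_const, Finset.card_univ, Fintype.card_fin]
  have hfsum : ∑ x : Fin s, f x = 1 := by
    have hpt : ∀ x : Fin s, f x = q + (if x = a then pex - q else 0) := by
      intro x; rw [hf x]
      by_cases hx : x = a <;> simp [hx]
    rw [Finset.sum_congr rfl (fun x _ => hpt x), Finset.sum_add_distrib,
      Finset.sum_const, Finset.sum_ite_eq']
    simp only [Finset.mem_univ, if_true, Finset.card_univ, Fintype.card_fin, nsmul_eq_mul]
    have hh : ((s:ℝ) - 1) * q = 1 - pex := by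
      rw [hqdef]
      field_simp
    linear_combination hh
  have hPsum : ∑ ω : Fin n → Fin s, P ω = 1 := by
    rw [hPdef, hprodsum f, hfsum, one_pow]
  -- notation for counts
  set N : Fin s → (Fin n → Fin s) → ℕ :=
    fun c ω => (Finset.univ.filter (fun i => ω i = c)).card with hNdef
  -- per-wrong-answer bound
  have key : ∀ c : Fin s, c ≠ a →
      ∑ ω : Fin n → Fin s, (if N a ω ≤ N c ω then P ω else 0) ≤ ε / (2*(s:ℝ)) := by
    intro c hc
    have hca : ¬ a = c := fun h => hc h.symm
    set w : Fin s → ℝ := fun x => if x = c then u else if x = a then u⁻¹ else 1 with hwdef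
    have hw0 : ∀ x, 0 ≤ w x := by
      intro x; simp only [hwdef]
      split_ifs
      · exact hu0.le
      · positivity
      · exact zero_le_one
    have hwprod : ∀ ω : Fin n → Fin s, ∏ i, w (ω i) = u ^ (N c ω) * u⁻¹ ^ (N a ω) := by
      intro ω
      have hpt : ∀ i : Fin n, w (ω i) =
          u ^ (if ω i = c then 1 else 0) * u⁻¹ ^ (if ω i = a then 1 else 0) := by
        intro i
        simp only [hwdef]
        by_cases h1 : ω i = c
        · have h2 : ¬ ω i = a := by rw [h1]; exact hc
          simp [h1, h2, hc]
        · by_cases h2 : ω i = a <;> simp [h1, h2, hca]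
      have hcount : ∀ d : Fin s, N d ω = ∑ i : Fin n, if ω i = d then 1 else 0 := by
        intro d
        simp only [hNdef]
        exact Finset.card_filter _ _
      rw [Finset.prod_congr rfl (fun i _ => hpt i), Finset.prod_mul_distrib,
        Finset.prod_pow_eq_pow_sum, Finset.prod_pow_eq_pow_sum, hcount, hcount]
    have hstep : ∀ ω : Fin n → Fin s,
        (if N a ω ≤ N c ω then P ω else 0) ≤ ∏ i, (f (ω i) * w (ω i)) := by
      intro ω
      rw [Finset.prod_mul_distrib, hwprod ω]
      split
      · next h =>
        have h1 : u ^ (N a ω) ≤ u ^ (N c ω) := pow_le_pow_right₀ hu1 h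
        have h2 : (1:ℝ) ≤ u ^ (N c ω) * u⁻¹ ^ (N a ω) := by
          rw [inv_pow, ← div_eq_mul_inv, le_div_iff₀ (by positivity)]
          simpa using h1
        calc P ω = P ω * 1 := (mul_one _).symm
          _ ≤ P ω * (u ^ (N c ω) * u⁻¹ ^ (N a ω)) :=
              mul_le_mul_of_nonneg_left h2 (hP0 ω)
      · exact mul_nonneg (hP0 ω) (by positivity)
    have hSval : ∑ x : Fin s, f x * w x = 1 + q * (u - 1) + pex * (u⁻¹ - 1) := by
      have hfc : f c = q := by rw [hf c]; simp [hc]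
      have hpt : ∀ x : Fin s, f x * w x =
          f x + (if x = c then f x * (u - 1) else 0) + (if x = a then f x * (u⁻¹ - 1) else 0) := by
        intro x
        simp only [hwdef]
        by_cases h1 : x = c
        · subst h1
          simp [hc]
          ring
        · by_cases h2 : x = a
          · subst h2
            simp [hca, h1]
            ring
          · simp [h1, h2]
      rw [Finset.sum_congr rfl (fun x _ => hpt x), Finset.sum_add_distrib,
        Finset.sum_add_distrib, hfsum, Finset.sum_ite_eq', Finset.sum_ite_eq']
      simp [hfc, hfa]
    have hS0 : 0 ≤ ∑ x : Fin s, f x * w x :=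
      Finset.sum_nonneg fun x _ => mul_nonneg (hf0 x) (hw0 x)
    have hSle : ∑ x : Fin s, f x * w x ≤ E := by
      rw [hSval]
      exact stmt8_aux q pex δ u E hq0 hpq hr hδ0 hδ1 hu1 hu2 hEbound
    calc ∑ ω : Fin n → Fin s, (if N a ω ≤ N c ω then P ω else 0)
        ≤ ∑ ω : Fin n → Fin s, ∏ i, (f (ω i) * w (ω i)) :=
          Finset.sum_le_sum fun ω _ => hstep ω
      _ = (∑ x : Fin s, f x * w x)^n := hprodsum (fun x => f x * w x)
      _ ≤ E^n := pow_le_pow_left₀ hS0 hSle n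
      _ ≤ ε / (2*(s:ℝ)) := hEn
  -- union bound
  have hunion : ∀ ω : Fin n → Fin s,
      (if ∀ c : Fin s, c ≠ a → N c ω < N a ω then 0 else P ω)
        ≤ ∑ c ∈ Finset.univ.erase a, (if N a ω ≤ N c ω then P ω else 0) := by
    intro ω
    split
    · refine Finset.sum_nonneg fun c _ => ?_
      split
      · exact hP0 ω
      · exact le_rfl
    · next h =>
      push_neg at h
      obtain ⟨c, hc, hle⟩ := h
      have hmem : c ∈ Finset.univ.erase a := Finset.mem_erase.mpr ⟨hc, Finset.mem_univ c⟩
      have hterm : (if N a ω ≤ N c ω then P ω else 0) = P ω := by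
        rw [if_pos hle]
      calc P ω = (if N a ω ≤ N c ω then P ω else 0) := hterm.symm
        _ ≤ ∑ c ∈ Finset.univ.erase a, (if N a ω ≤ N c ω then P ω else 0) := by
            refine Finset.single_le_sum
              (f := fun d => if N a ω ≤ N d ω then P ω else 0) (fun d _ => ?_) hmem
            split
            · exact hP0 ω
            · exact le_rfl
  have hbad : ∑ ω : Fin n → Fin s,
      (if ∀ c : Fin s, c ≠ a → N c ω < N a ω then 0 else P ω) ≤ ε := by
    calc ∑ ω : Fin n → Fin s, (if ∀ c : Fin s, c ≠ a → N c ω < N a ω then 0 else P ω)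
        ≤ ∑ ω : Fin n → Fin s, ∑ c ∈ Finset.univ.erase a, (if N a ω ≤ N c ω then P ω else 0) :=
          Finset.sum_le_sum fun ω _ => hunion ω
      _ = ∑ c ∈ Finset.univ.erase a, ∑ ω : Fin n → Fin s, (if N a ω ≤ N c ω then P ω else 0) :=
          Finset.sum_comm
      _ ≤ ∑ c ∈ Finset.univ.erase a, (ε / (2*(s:ℝ))) :=
          Finset.sum_le_sum fun c hc => key c (Finset.mem_erase.mp hc).1
      _ = ((s:ℝ) - 1) * (ε / (2*(s:ℝ))) := by
          rw [Finset.sum_const, Finset.card_erase_of_mem (Finset.mem_univ a),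
            Finset.card_univ, Fintype.card_fin, nsmul_eq_mul]
          congr 1
          have h1s : (1:ℕ) ≤ s := by omega
          push_cast [Nat.cast_sub h1s]
          ring
      _ ≤ ε := by
          rw [div_eq_mul_inv]
          have h1 : ((s:ℝ) - 1) * (ε * (2*(s:ℝ))⁻¹) ≤ (s:ℝ) * (ε * (2*(s:ℝ))⁻¹) := by
            apply mul_le_mul_of_nonneg_right (by linarith) (by positivity)
          have h2 : (s:ℝ) * (ε * (2*(s:ℝ))⁻¹) = ε/2 := by
            field_simp
          linarith
  -- conclude
  have hrw : ∑ ω : Fin n → Fin s,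
      (if ∀ c : Fin s, c ≠ a → N c ω < N a ω then P ω else 0)
      = 1 - ∑ ω : Fin n → Fin s,
        (if ∀ c : Fin s, c ≠ a → N c ω < N a ω then 0 else P ω) := by
    rw [← hPsum, ← Finset.sum_sub_distrib]
    apply Finset.sum_congr rfl
    intro ω _
    split <;> ring
  have hfinal : 1 - ε ≤ ∑ ω : Fin n → Fin s,
      (if ∀ c : Fin s, c ≠ a → N c ω < N a ω then P ω else 0) := by
    rw [hrw]
    linarith
  exact hfinal
end

section
/- For every positive integer k, the central binomial coefficient satisfies C(2k, k) ≤ 4^k / √(π·k). -/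
/-!
With Stirling's sequence `sₙ = n! / (√(2n) (n/e)ⁿ)` one has `C(2n, n) = s₂ₙ / sₙ² · 4ⁿ / √n`.
Since `sₙ` decreases to `√π` for `n ≥ 1`, `s₂ₙ / sₙ² ≤ 1 / sₙ ≤ 1 / √π`.
-/

open Real Stirling Nat

lemma stirlingSeq_pos {n : ℕ} (hn : n ≠ 0) : 0 < stirlingSeq n :=
  (sqrt_pos.2 pi_pos).trans_le (sqrt_pi_le_stirlingSeq hn)

lemma factorial_eq_stirlingSeq_mul {n : ℕ} (hn : n ≠ 0) :
    (n ! : ℝ) = stirlingSeq n * (√(2 * n) * (n / exp 1) ^ n) := by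
  rw [stirlingSeq, div_mul_cancel₀]
  positivity

lemma cast_centralBinom_eq_factorial_div (n : ℕ) :
    (centralBinom n : ℝ) = (2 * n)! / n ! ^ 2 := by
  rw [centralBinom_eq_two_mul_choose, cast_choose ℝ (by omega : n ≤ 2 * n),
    show 2 * n - n = n by omega, sq]

lemma centralBinom_eq_stirlingSeq {n : ℕ} (hn : n ≠ 0) :
    (centralBinom n : ℝ) = stirlingSeq (2 * n) / stirlingSeq n ^ 2 * (4 ^ n / √n) := by
  have hn' : (0 : ℝ) < n := by positivity
  have h4n : √(2 * (2 * n : ℕ)) = 2 * √n := by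
    push_cast
    rw [show (2 : ℝ) * (2 * n) = 2 ^ 2 * n by ring, sqrt_mul (by positivity), sqrt_sq zero_le_two]
  have hpow : ((2 * n : ℕ) / exp 1 : ℝ) ^ (2 * n) = 4 ^ n * ((n / exp 1) ^ n) ^ 2 := by
    push_cast
    rw [mul_div_assoc, mul_pow, pow_mul 2, show (2 : ℝ) ^ 2 = 4 by norm_num]
    ring
  rw [cast_centralBinom_eq_factorial_div, factorial_eq_stirlingSeq_mul hn,
    factorial_eq_stirlingSeq_mul (by omega), h4n, hpow, mul_pow, mul_pow,
    sq_sqrt (by positivity)]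
  have hs := (stirlingSeq_pos hn).ne'
  field_simp
  rw [sq_sqrt hn'.le]

lemma stirlingSeq_two_mul_le {n : ℕ} (hn : n ≠ 0) : stirlingSeq (2 * n) ≤ stirlingSeq n := by
  obtain ⟨m, rfl⟩ := exists_eq_succ_of_ne_zero hn
  exact stirlingSeq'_antitone (show m ≤ 2 * m + 1 by omega)

lemma stirlingSeq_two_mul_div_sq_le {n : ℕ} (hn : n ≠ 0) :
    stirlingSeq (2 * n) / stirlingSeq n ^ 2 ≤ 1 / √π := by
  have hs := stirlingSeq_pos hn
  calc stirlingSeq (2 * n) / stirlingSeq n ^ 2 ≤ stirlingSeq n / stirlingSeq n ^ 2 := by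
        gcongr; exact stirlingSeq_two_mul_le hn
    _ = 1 / stirlingSeq n := by field_simp
    _ ≤ 1 / √π := by gcongr; exact sqrt_pi_le_stirlingSeq hn

/-- Central binomial coefficient bound: C(2k,k) ≤ 4^k / √(πk). -/
theorem stmt11 (k : ℕ) (hk : 0 < k) :
    ((2 * k).choose k : ℝ) ≤ 4 ^ k / Real.sqrt (Real.pi * k) := by
  calc ((2 * k).choose k : ℝ)
      = stirlingSeq (2 * k) / stirlingSeq k ^ 2 * (4 ^ k / √k) := by
        rw [← centralBinom_eq_two_mul_choose, centralBinom_eq_stirlingSeq hk.ne']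
    _ ≤ 1 / √π * (4 ^ k / √k) :=
        mul_le_mul_of_nonneg_right (stirlingSeq_two_mul_div_sq_le hk.ne') (by positivity)
    _ = 4 ^ k / √(π * k) := by
        rw [sqrt_mul pi_pos.le]; ring
end

section
/- Suppose n workers answer m questions, with n_ex ≥ 2 experts who independently give the correct answer to each question with probability p_ex > 1/s (and a uniform wrong answer otherwise) and n - n_ex non-experts who answer each question uniformly at random among s candidates, all independently. Define the expert core W* as the subset of workers maximizing min_{u∈W} Σ_{v∈W\{u}} γ(u,v), where γ(u,v) = -log Σ_{i=τ(u,v)}^m C(m,i) p^i (1-p)^{m-i}, τ(u,v) is the number of questions on which u and v agree, and p is the empirical average pairwise agreement rate. If m ≥ 2n⁴·log(n²/ε)/(p_ex - 1/s)⁴ for some ε ∈ (0,1], then with probability at least 1 - ε the expert core contains only experts. -/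
/-!
For two distinct workers the number of questions on which they agree is binomial: its success
probability is `q = 1/s + (p_ex - 1/s)² s/(s-1)` for two experts and `1/s` for any other pair.
By Hoeffding's inequality and a union bound over the ordered pairs, with probability at least
`1 - ε` every agreement count lies within `m t`, `t = (5/8) x`, `x = (p_ex - 1/s)²/n²`, of its
mean. The empirical rate `p` is the average of these counts, so on that event it exceeds `1/s`
by about `x` but stays below `q` by about `n x`. Hoeffding's inequality, now applied to the
binomial tail inside `γ`, then gives `γ ≤ log 2` on every pair containing a non-expert and
`γ ≥ 2 m (n x)²` on every pair of experts. The experts alone thus have minimum degree at least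
`2 m (n x)²`, while a set containing a non-expert has a vertex of degree at most `(n - 1) log 2`,
which is smaller: a maximin set consists of experts only.
-/

open Real Finset

open ProbabilityTheory MeasureTheory in
lemma one_sub_add_mul_exp_le {p : ℝ} (hp0 : 0 ≤ p) (hp1 : p ≤ 1) (x : ℝ) :
    1 - p + p * exp x ≤ exp (p * x + x ^ 2 / 8) := by
  set μ : Measure ℝ := bernoulliMeasure 1 0 ⟨p, hp0, hp1⟩
  have hsupp : ∀ᵐ y ∂μ, id y ∈ Set.Icc (0 : ℝ) 1 := by
    rw [ae_iff]
    exact bernoulliMeasure_apply_of_notMem_of_notMem _ measurableSet_Icc.compl (by simp) (by simp)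
  have hmean : μ[id] = p := by simp [μ, integral_bernoulliMeasure]
  have hmgf := (hasSubgaussianMGF_of_mem_Icc measurable_id.aemeasurable hsupp).mgf_le x
  simp only [mgf, μ, integral_bernoulliMeasure, hmean] at hmgf
  norm_num at hmgf
  have hpos : exp (p * x) * exp (x * (1 - p)) = exp x := by rw [← exp_add]; ring_nf
  have hneg : exp (p * x) * exp (-(x * p)) = 1 := by rw [← exp_add]; ring_nf; exact exp_zero
  calc 1 - p + p * exp x
      = exp (p * x) * (p * exp (x * (1 - p)) + (1 - p) * exp (-(x * p))) := by
        linear_combination (-p) * hpos - (1 - p) * hneg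
    _ ≤ exp (p * x) * exp (1 / 4 * x ^ 2 / 2) := by gcongr
    _ = exp (p * x + x ^ 2 / 8) := by rw [← exp_add]; ring_nf

/-- The only property of the law of `K` under the weights `w` that the Chernoff bounds use. -/
def HasBinomialPGF {ι : Type*} (s : Finset ι) (w : ι → ℝ) (K : ι → ℕ) (m : ℕ) (p : ℝ) :
    Prop :=
  ∀ r : ℝ, ∑ i ∈ s, w i * r ^ K i = (1 - p + p * r) ^ m

namespace HasBinomialPGF

variable {ι : Type*} {s : Finset ι} {w : ι → ℝ} {K : ι → ℕ} {m : ℕ} {p : ℝ}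

lemma sum_eq_one (h : HasBinomialPGF s w K m p) : ∑ i ∈ s, w i = 1 := by
  simpa using h 1

lemma sum_filter_le_exp (h : HasBinomialPGF s w K m p) (hw : ∀ i ∈ s, 0 ≤ w i)
    (hp0 : 0 ≤ p) (hp1 : p ≤ 1) (A : ι → Prop) [DecidablePred A] (l c : ℝ)
    (hA : ∀ i ∈ s, A i → c ≤ l * K i) :
    ∑ i ∈ s with A i, w i ≤ exp (m * (p * l + l ^ 2 / 8) - c) := by
  calc ∑ i ∈ s with A i, w i ≤ ∑ i ∈ s, w i * exp (l * K i - c) := by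
        rw [sum_filter]
        refine sum_le_sum fun i hi => ?_
        split_ifs with hAi
        · exact le_mul_of_one_le_right (hw i hi) (one_le_exp (by linarith [hA i hi hAi]))
        · exact mul_nonneg (hw i hi) (exp_pos _).le
    _ = exp (-c) * (1 - p + p * exp l) ^ m := by
        rw [← h, mul_sum]
        refine sum_congr rfl fun i _ => ?_
        rw [← exp_nat_mul, mul_left_comm, ← exp_add]
        ring_nf
    _ ≤ exp (-c) * exp (p * l + l ^ 2 / 8) ^ m := by
        have hbase : 0 ≤ 1 - p + p * exp l := by nlinarith [exp_pos l]
        gcongr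
        exact one_sub_add_mul_exp_le hp0 hp1 l
    _ = exp (m * (p * l + l ^ 2 / 8) - c) := by
        rw [← exp_nat_mul, ← exp_add]
        ring_nf

lemma sum_upper_tail_le (h : HasBinomialPGF s w K m p) (hw : ∀ i ∈ s, 0 ≤ w i)
    (hp0 : 0 ≤ p) (hp1 : p ≤ 1) {t : ℝ} (ht : 0 ≤ t) :
    ∑ i ∈ s with m * (p + t) ≤ K i, w i ≤ exp (-(2 * m * t ^ 2)) := by
  refine (h.sum_filter_le_exp hw hp0 hp1 _ (4 * t) (4 * t * (m * (p + t)))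
    fun i _ hi => by gcongr).trans_eq ?_
  ring_nf

lemma sum_lower_tail_le (h : HasBinomialPGF s w K m p) (hw : ∀ i ∈ s, 0 ≤ w i)
    (hp0 : 0 ≤ p) (hp1 : p ≤ 1) {t : ℝ} (ht : 0 ≤ t) :
    ∑ i ∈ s with (K i : ℝ) ≤ m * (p - t), w i ≤ exp (-(2 * m * t ^ 2)) := by
  refine (h.sum_filter_le_exp hw hp0 hp1 _ (-(4 * t)) (-(4 * t) * (m * (p - t)))
    fun i _ hi => by nlinarith).trans_eq ?_
  ring_nf

lemma sum_deviation_le (h : HasBinomialPGF s w K m p) (hw : ∀ i ∈ s, 0 ≤ w i)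
    (hp0 : 0 ≤ p) (hp1 : p ≤ 1) {t : ℝ} (ht : 0 ≤ t) :
    ∑ i ∈ s with m * t < |(K i : ℝ) - m * p|, w i ≤ 2 * exp (-(2 * m * t ^ 2)) := by
  classical
  have hsub : {i ∈ s | m * t < |(K i : ℝ) - m * p|}
      ⊆ {i ∈ s | m * (p + t) ≤ K i} ∪ {i ∈ s | (K i : ℝ) ≤ m * (p - t)} := by
    intro i hi
    simp only [mem_filter, mem_union] at hi ⊢
    rcases lt_abs.1 hi.2 with hK | hK
    · exact Or.inl ⟨hi.1, by linarith⟩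
    · exact Or.inr ⟨hi.1, by linarith⟩
  have hw' : ∀ i ∈ {i ∈ s | m * (p + t) ≤ K i} ∪ {i ∈ s | (K i : ℝ) ≤ m * (p - t)}, 0 ≤ w i :=
    fun i hi => hw i <| (mem_union.1 hi).elim (fun h => (mem_filter.1 h).1)
      fun h => (mem_filter.1 h).1
  calc ∑ i ∈ s with m * t < |(K i : ℝ) - m * p|, w i
      ≤ ∑ i ∈ {i ∈ s | m * (p + t) ≤ K i} ∪ {i ∈ s | (K i : ℝ) ≤ m * (p - t)}, w i :=
        sum_le_sum_of_subset_of_nonneg hsub fun i hi _ => hw' i hi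
    _ ≤ ∑ i ∈ s with m * (p + t) ≤ K i, w i + ∑ i ∈ s with (K i : ℝ) ≤ m * (p - t), w i := by
        rw [← sum_union_inter]
        exact le_add_of_nonneg_right <| sum_nonneg fun i hi =>
          hw' i (mem_union_left _ (mem_inter.1 hi).1)
    _ ≤ 2 * exp (-(2 * m * t ^ 2)) := by
        linarith [h.sum_upper_tail_le hw hp0 hp1 ht, h.sum_lower_tail_le hw hp0 hp1 ht]

end HasBinomialPGF

lemma hasBinomialPGF_range_choose (m : ℕ) (p : ℝ) :
    HasBinomialPGF (range (m + 1)) (fun i => (m.choose i : ℝ) * p ^ i * (1 - p) ^ (m - i)) id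
      m p := by
  intro r
  rw [add_comm (1 - p), add_pow]
  refine sum_congr rfl fun i _ => ?_
  simp only [id, mul_pow]
  ring

def binomialTail (m k : ℕ) (p : ℝ) : ℝ :=
  ∑ i ∈ Icc k m, (m.choose i : ℝ) * p ^ i * (1 - p) ^ (m - i)

section binomialTail

variable {m k : ℕ} {p h : ℝ}

lemma binomialTail_eq_sum_filter (m k : ℕ) (p : ℝ) :
    binomialTail m k p
      = ∑ i ∈ range (m + 1) with k ≤ i, (m.choose i : ℝ) * p ^ i * (1 - p) ^ (m - i) := by
  unfold binomialTail
  congr 1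
  ext i
  simp [and_comm]

lemma choose_mul_pow_mul_pow_nonneg (hp0 : 0 ≤ p) (hp1 : p ≤ 1) (i : ℕ) :
    0 ≤ (m.choose i : ℝ) * p ^ i * (1 - p) ^ (m - i) := by
  have : 0 ≤ 1 - p := by linarith
  positivity

lemma binomialTail_pos (hp0 : 0 < p) (hp1 : p ≤ 1) (hk : k ≤ m) : 0 < binomialTail m k p := by
  have hlast : 0 < (m.choose m : ℝ) * p ^ m * (1 - p) ^ (m - m) := by simp [hp0]
  exact hlast.trans_le <| single_le_sum (fun i _ => choose_mul_pow_mul_pow_nonneg hp0.le hp1 i)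
    (mem_Icc.2 ⟨hk, le_rfl⟩)

lemma binomialTail_le_exp (hp0 : 0 ≤ p) (hp1 : p ≤ 1) (hh : 0 ≤ h) (hk : m * (p + h) ≤ k) :
    binomialTail m k p ≤ exp (-(2 * m * h ^ 2)) := by
  rw [binomialTail_eq_sum_filter]
  refine le_trans (sum_le_sum_of_subset_of_nonneg ?_ fun i _ _ =>
    choose_mul_pow_mul_pow_nonneg hp0 hp1 i)
    ((hasBinomialPGF_range_choose m p).sum_upper_tail_le
      (fun i _ => choose_mul_pow_mul_pow_nonneg hp0 hp1 i) hp0 hp1 hh)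
  intro i hi
  simp only [mem_filter, id] at hi ⊢
  exact ⟨hi.1, hk.trans (Nat.cast_le.2 hi.2)⟩

lemma one_sub_exp_le_binomialTail (hp0 : 0 ≤ p) (hp1 : p ≤ 1) (hh : 0 ≤ h)
    (hk : k ≤ m * (p - h)) : 1 - exp (-(2 * m * h ^ 2)) ≤ binomialTail m k p := by
  have hsum := (hasBinomialPGF_range_choose m p).sum_eq_one
  rw [← sum_filter_add_sum_filter_not _ (k ≤ ·)] at hsum
  have hlower :
      ∑ i ∈ range (m + 1) with ¬ k ≤ i, (m.choose i : ℝ) * p ^ i * (1 - p) ^ (m - i)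
        ≤ exp (-(2 * m * h ^ 2)) := by
    refine le_trans (sum_le_sum_of_subset_of_nonneg ?_ fun i _ _ =>
      choose_mul_pow_mul_pow_nonneg hp0 hp1 i)
      ((hasBinomialPGF_range_choose m p).sum_lower_tail_le
        (fun i _ => choose_mul_pow_mul_pow_nonneg hp0 hp1 i) hp0 hp1 hh)
    intro i hi
    simp only [mem_filter, id, not_le] at hi ⊢
    exact ⟨hi.1, le_trans (Nat.cast_le.2 hi.2.le) hk⟩
  rw [binomialTail_eq_sum_filter]
  linarith

lemma neg_log_binomialTail_le_log_two (hp0 : 0 ≤ p) (hp1 : p ≤ 1) (hh : 0 ≤ h)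
    (hlog : log 2 ≤ 2 * m * h ^ 2) (hk : k ≤ m * (p - h)) :
    -log (binomialTail m k p) ≤ log 2 := by
  have hexp : exp (-(2 * m * h ^ 2)) ≤ 1 / 2 :=
    calc exp (-(2 * m * h ^ 2)) ≤ exp (-log 2) := exp_le_exp.2 (neg_le_neg hlog)
      _ = 1 / 2 := by rw [exp_neg, exp_log two_pos, one_div]
  have hhalf : 1 / 2 ≤ binomialTail m k p := by
    linarith [one_sub_exp_le_binomialTail hp0 hp1 hh hk]
  have := log_le_log (by norm_num) hhalf
  rw [one_div, log_inv] at this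
  linarith

lemma le_neg_log_binomialTail (hp0 : 0 < p) (hp1 : p ≤ 1) (hkm : k ≤ m) (hh : 0 ≤ h)
    (hk : m * (p + h) ≤ k) : 2 * m * h ^ 2 ≤ -log (binomialTail m k p) := by
  have := (log_le_iff_le_exp (binomialTail_pos hp0 hp1 hkm)).2
    (binomialTail_le_exp hp0.le hp1 hh hk)
  linarith

end binomialTail

section AgreementCount

variable {V Q C : Type*} [Fintype V] [Fintype Q] [Fintype C] [DecidableEq V] [DecidableEq Q]
  [DecidableEq C]

lemma sum_prod_mul_ite_apply_eq_apply (F : V → C → ℝ) (hF : ∀ w, ∑ c, F w c = 1) {u v : V}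
    (huv : u ≠ v) (r : ℝ) :
    ∑ x : V → C, (∏ w, F w (x w)) * (if x u = x v then r else 1)
      = 1 + (∑ c, F u c * F v c) * (r - 1) := by
  -- `∏ w, G c w (x w)` is the weight of `x` restricted to the event `x u = c ∧ x v = c`.
  set G : C → V → C → ℝ := fun c w y =>
    F w y * if w ∈ ({u, v} : Finset V) then (if y = c then 1 else 0) else 1
  have hsplit : ∀ x : V → C, (if x u = x v then r else 1)
      = 1 + (r - 1) * ∑ c, (if x u = c then 1 else 0) * (if x v = c then 1 else 0) := by
    intro x
    by_cases h : x u = x v <;> simp [h, eq_comm]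
  have hG : ∀ (c : C) (x : V → C),
      (∏ w, F w (x w)) * ((if x u = c then 1 else 0) * (if x v = c then 1 else 0))
        = ∏ w, G c w (x w) := by
    intro c x
    rw [prod_mul_distrib, Fintype.prod_ite_mem, prod_pair huv]
  have hmarginal : ∀ c : C, ∑ x : V → C, ∏ w, G c w (x w) = F u c * F v c := by
    intro c
    have hrow : ∀ w, ∑ y, G c w y = if w ∈ ({u, v} : Finset V) then F w c else 1 := by
      intro w
      split_ifs with hw
      · simp only [G, if_pos hw, mul_ite, mul_one, mul_zero, sum_ite_eq', mem_univ, if_true]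
      · simp only [G, if_neg hw, mul_one, hF]
    rw [← Fintype.prod_sum, Fintype.prod_congr _ _ hrow, Fintype.prod_ite_mem, prod_pair huv]
  simp only [hsplit, mul_add, mul_one, mul_sum, hG, mul_left_comm _ (r - 1)]
  rw [sum_add_distrib, ← Fintype.prod_sum, sum_comm, Fintype.prod_congr _ _ hF, prod_const_one,
    sum_mul]
  congr 1
  refine sum_congr rfl fun c _ => ?_
  rw [← mul_sum, hmarginal, mul_comm]

lemma hasBinomialPGF_card_agreements (f : V → Q → C → ℝ) (hf : ∀ w q, ∑ c, f w q c = 1) {u v : V}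
    (huv : u ≠ v) {p : ℝ} (hp : ∀ q, ∑ c, f u q c * f v q c = p) :
    HasBinomialPGF univ (fun ω : V → Q → C => ∏ w, ∏ q, f w q (ω w q))
      (fun ω => #{q | ω u q = ω v q}) (Fintype.card Q) p := by
  intro r
  have hcolumns : ∀ ω : V → Q → C, (∏ w, ∏ q, f w q (ω w q)) * r ^ #{q | ω u q = ω v q}
      = ∏ q, (∏ w, f w q (ω w q)) * (if ω u q = ω v q then r else 1) := by
    intro ω
    rw [← prod_const, prod_filter, prod_comm, ← prod_mul_distrib]
  simp only [hcolumns]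
  rw [← (Equiv.piComm fun (_ : Q) (_ : V) => C).sum_comp]
  simp only [Equiv.piComm_apply]
  rw [← Fintype.prod_sum fun q (x : V → C) =>
    (∏ w, f w q (x w)) * (if x u = x v then r else 1)]
  simp only [sum_prod_mul_ite_apply_eq_apply _ (fun w => hf w _) huv, hp, prod_const, card_univ]
  ring

end AgreementCount

lemma sum_ite_eq_add_card_sub_one_mul {C : Type*} [Fintype C] [DecidableEq C] (c₀ : C)
    (x y : ℝ) : ∑ c, (if c = c₀ then x else y) = x + (Fintype.card C - 1) * y := by
  rw [Fintype.sum_eq_add_sum_compl c₀, if_pos rfl,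
    sum_congr rfl fun c hc => if_neg (mem_compl.1 hc ∘ mem_singleton.2), sum_const,
    card_compl, card_singleton, nsmul_eq_mul, Nat.cast_sub (Fintype.card_pos_iff.2 ⟨c₀⟩),
    Nat.cast_one]

noncomputable def answerLaw {n m s : ℕ} (E : Finset (Fin n)) (a : Fin m → Fin s) (pex : ℝ)
    (w : Fin n) (q : Fin m) (c : Fin s) : ℝ :=
  if w ∈ E then (if c = a q then pex else (1 - pex) / ((s : ℝ) - 1)) else 1 / (s : ℝ)

-- For two experts this is `pex ^ 2 + (1 - pex) ^ 2 / (s - 1)`.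
noncomputable def agreementProb {n : ℕ} (E : Finset (Fin n)) (s : ℕ) (pex : ℝ) (u v : Fin n) :
    ℝ :=
  1 / s + if u ∈ E ∧ v ∈ E then (pex - 1 / s) ^ 2 * s / (s - 1) else 0

section answerLaw

variable {n m s : ℕ} {E : Finset (Fin n)} {a : Fin m → Fin s} {pex : ℝ}

lemma answerLaw_nonneg (hs : 2 ≤ s) (hp0 : 0 ≤ pex) (hp1 : pex ≤ 1) (w : Fin n) (q : Fin m)
    (c : Fin s) : 0 ≤ answerLaw E a pex w q c := by
  have hs' : (2 : ℝ) ≤ s := by exact_mod_cast hs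
  unfold answerLaw
  split_ifs
  · exact hp0
  · exact div_nonneg (by linarith) (by linarith)
  · positivity

lemma sum_answerLaw (hs : 2 ≤ s) (w : Fin n) (q : Fin m) :
    ∑ c, answerLaw E a pex w q c = 1 := by
  have hs1 : (s : ℝ) - 1 ≠ 0 := by
    have : (2 : ℝ) ≤ s := by exact_mod_cast hs
    linarith
  unfold answerLaw
  split_ifs
  · rw [sum_ite_eq_add_card_sub_one_mul, Fintype.card_fin]
    field_simp
    ring
  · simp only [sum_const, card_univ, Fintype.card_fin, nsmul_eq_mul]
    field_simp

lemma sum_answerLaw_mul_answerLaw (hs : 2 ≤ s) (u v : Fin n) (q : Fin m) :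
    ∑ c, answerLaw E a pex u q c * answerLaw E a pex v q c = agreementProb E s pex u v := by
  have hs1 : (s : ℝ) - 1 ≠ 0 := by
    have : (2 : ℝ) ≤ s := by exact_mod_cast hs
    linarith
  by_cases hu : u ∈ E
  · by_cases hv : v ∈ E
    · have hsq : ∀ c, answerLaw E a pex u q c * answerLaw E a pex v q c
          = if c = a q then pex ^ 2 else ((1 - pex) / (s - 1)) ^ 2 := fun c => by
        simp only [answerLaw, if_pos hu, if_pos hv]
        split_ifs <;> ring
      rw [sum_congr rfl fun c _ => hsq c, sum_ite_eq_add_card_sub_one_mul, Fintype.card_fin,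
        agreementProb, if_pos ⟨hu, hv⟩]
      field_simp
      ring
    · simp only [answerLaw.eq_def (w := v), agreementProb, if_neg hv,
        if_neg fun h : u ∈ E ∧ v ∈ E => hv h.2, ← sum_mul, sum_answerLaw hs, add_zero, one_mul]
  · simp only [answerLaw.eq_def (w := u), agreementProb, if_neg hu,
      if_neg fun h : u ∈ E ∧ v ∈ E => hu h.1, ← mul_sum, sum_answerLaw hs, add_zero, mul_one]

lemma agreementProb_mem_Icc (hs : 2 ≤ s) (hp0 : 0 ≤ pex) (hp1 : pex ≤ 1) (u v : Fin n) :
    agreementProb E s pex u v ∈ Set.Icc 0 1 := by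
  have hs' : (2 : ℝ) ≤ s := by exact_mod_cast hs
  have hs1 : (s : ℝ) - 1 ≠ 0 := by linarith
  unfold agreementProb
  split_ifs
  · have hexperts :
        1 / s + (pex - 1 / s) ^ 2 * s / (s - 1) = pex ^ 2 + (1 - pex) ^ 2 / (s - 1) := by
      field_simp
      ring
    have hwrong : (1 - pex) ^ 2 / (s - 1) ≤ (1 - pex) ^ 2 := div_le_self (sq_nonneg _) (by linarith)
    rw [hexperts]
    constructor <;> nlinarith [div_nonneg (sq_nonneg (1 - pex)) (by linarith : (0 : ℝ) ≤ s - 1)]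
  · constructor
    · positivity
    · rw [add_zero, div_le_one (by linarith)]
      linarith

lemma hasBinomialPGF_answerLaw (hs : 2 ≤ s) {u v : Fin n} (huv : u ≠ v) :
    HasBinomialPGF univ (fun ω : Fin n → Fin m → Fin s => ∏ w, ∏ q, answerLaw E a pex w q (ω w q))
      (fun ω => #{q | ω u q = ω v q}) m (agreementProb E s pex u v) := by
  simpa using hasBinomialPGF_card_agreements _ (sum_answerLaw hs) huv
    (sum_answerLaw_mul_answerLaw hs u v)

end answerLaw

lemma sum_filter_exists_le {ι κ : Type*} (s : Finset ι) (I : Finset κ) {w : ι → ℝ}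
    (hw : ∀ i ∈ s, 0 ≤ w i) (B : κ → ι → Prop) [∀ k, DecidablePred (B k)] :
    ∑ i ∈ s with ∃ k ∈ I, B k i, w i ≤ ∑ k ∈ I, ∑ i ∈ s with B k i, w i := by
  have hterm : ∀ i ∈ s, ∀ k, 0 ≤ if B k i then w i else 0 := fun i hi k => by
    split_ifs
    exacts [hw i hi, le_rfl]
  simp only [sum_filter]
  rw [sum_comm]
  refine sum_le_sum fun i hi => ?_
  split_ifs with h
  · obtain ⟨k, hk, hBk⟩ := h
    calc w i = if B k i then w i else 0 := (if_pos hBk).symm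
      _ ≤ ∑ k ∈ I, if B k i then w i else 0 := single_le_sum (fun k _ => hterm i hi k) hk
  · exact sum_nonneg fun k _ => hterm i hi k

lemma cast_card_offDiag {α : Type*} [DecidableEq α] (s : Finset α) :
    (#s.offDiag : ℝ) = #s * (#s - 1) := by
  rw [offDiag_card, Nat.cast_sub (Nat.le_mul_self _)]
  push_cast
  ring

lemma sum_filter_not_forall_abs_sub_le {ι V : Type*} [Fintype V] [DecidableEq V]
    {s : Finset ι} {w : ι → ℝ} (hw : ∀ i ∈ s, 0 ≤ w i) {K : ι → V → V → ℕ} {m : ℕ}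
    {p : V → V → ℝ} (hp : ∀ u v, p u v ∈ Set.Icc 0 1)
    (hK : ∀ u v, u ≠ v → HasBinomialPGF s w (K · u v) m (p u v)) {t : ℝ} (ht : 0 ≤ t)
    [DecidablePred fun i => ∀ u v, u ≠ v → |(K i u v : ℝ) - m * p u v| ≤ m * t] :
    ∑ i ∈ s with ¬ ∀ u v, u ≠ v → |(K i u v : ℝ) - m * p u v| ≤ m * t, w i
      ≤ Fintype.card V ^ 2 * (2 * exp (-(2 * m * t ^ 2))) := by
  classical
  calc ∑ i ∈ s with ¬ ∀ u v, u ≠ v → |(K i u v : ℝ) - m * p u v| ≤ m * t, w i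
      = ∑ i ∈ s with ∃ uv ∈ (univ : Finset V).offDiag,
          m * t < |(K i uv.1 uv.2 : ℝ) - m * p uv.1 uv.2|, w i := by
        refine sum_congr (filter_congr fun i _ => ?_) fun _ _ => rfl
        simp [mem_offDiag]
    _ ≤ ∑ uv ∈ (univ : Finset V).offDiag,
          ∑ i ∈ s with m * t < |(K i uv.1 uv.2 : ℝ) - m * p uv.1 uv.2|, w i :=
        sum_filter_exists_le _ _ hw _
    _ ≤ ∑ _uv ∈ (univ : Finset V).offDiag, 2 * exp (-(2 * m * t ^ 2)) :=
        sum_le_sum fun uv huv => (hK _ _ (mem_offDiag.1 huv).2.2).sum_deviation_le hw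
          (hp _ _).1 (hp _ _).2 ht
    _ ≤ Fintype.card V ^ 2 * (2 * exp (-(2 * m * t ^ 2))) := by
        rw [sum_const, nsmul_eq_mul, cast_card_offDiag, card_univ]
        gcongr
        nlinarith

lemma sum_card_agreeing_pairs {V Q C : Type*} [Fintype V] [Fintype Q] [DecidableEq V]
    [DecidableEq C] (ω : V → Q → C) :
    ∑ q, #{uv : V × V | uv.1 ≠ uv.2 ∧ ω uv.1 q = ω uv.2 q}
      = ∑ uv ∈ univ.offDiag, #{q | ω uv.1 q = ω uv.2 q} := by
  convert (sum_card_bipartiteAbove_eq_sum_card_bipartiteBelow (s := univ.offDiag) (t := univ)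
    (r := fun (uv : V × V) q => ω uv.1 q = ω uv.2 q)).symm using 3 with q
  · ext uv
    simp [bipartiteBelow, mem_offDiag]
  · rfl

lemma two_div_sq_le_offDiag_ratio {n k : ℕ} (hk : 2 ≤ k) (hkn : k ≤ n) :
    2 / (n : ℝ) ^ 2 ≤ k * (k - 1) / (n * (n - 1)) := by
  have hk' : (2 : ℝ) ≤ k := by exact_mod_cast hk
  have hn' : (k : ℝ) ≤ n := by exact_mod_cast hkn
  have hkk : 2 ≤ (k : ℝ) * (k - 1) := by nlinarith
  have hn0 : (0 : ℝ) < n := by linarith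
  rw [div_le_div_iff₀ (by positivity) (by nlinarith)]
  nlinarith

lemma offDiag_ratio_le_one_sub {n k : ℕ} (hk : 1 ≤ k) (hkn : k < n) :
    (k * (k - 1) : ℝ) / (n * (n - 1)) ≤ 1 - 2 / n := by
  have hk' : (1 : ℝ) ≤ k := by exact_mod_cast hk
  have hn' : (k : ℝ) + 1 ≤ n := by exact_mod_cast hkn
  have hn0 : (0 : ℝ) < n := by linarith
  rw [div_le_iff₀ (by nlinarith)]
  field_simp
  nlinarith

section EmpiricalRate

variable {n m : ℕ} {E : Finset (Fin n)} {b Δ t : ℝ} {τ : Fin n → Fin n → ℕ}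

lemma abs_empiricalRate_sub_le (hn : 2 ≤ n) (hm : 0 < m)
    (hτ : ∀ u v, u ≠ v → |(τ u v : ℝ) - m * (b + if u ∈ E ∧ v ∈ E then Δ else 0)| ≤ m * t) :
    |(∑ uv ∈ univ.offDiag, (τ uv.1 uv.2 : ℝ)) / (n * (n - 1)) / m
        - (b + Δ * (#E * (#E - 1) / (n * (n - 1))))| ≤ t := by
  set N : ℝ := n * (n - 1)
  have hN : 0 < N := by
    have : (2 : ℝ) ≤ n := by exact_mod_cast hn
    exact mul_pos (by linarith) (by linarith)
  have hm' : (0 : ℝ) < m := by exact_mod_cast hm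
  have hcard : (#(univ : Finset (Fin n)).offDiag : ℝ) = N := by
    rw [cast_card_offDiag, card_univ, Fintype.card_fin]
  have hmean : ∑ uv ∈ univ.offDiag, (m : ℝ) * (b + if uv.1 ∈ E ∧ uv.2 ∈ E then Δ else 0)
      = m * (N * b + #E * (#E - 1) * Δ) := by
    have hexperts : ({uv ∈ univ.offDiag | uv.1 ∈ E ∧ uv.2 ∈ E} : Finset (Fin n × Fin n))
        = E.offDiag := by
      ext uv
      simp only [mem_filter, mem_offDiag, mem_univ, true_and]
      tauto
    rw [← mul_sum, sum_add_distrib, sum_const, ← sum_filter, sum_const, hexperts,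
      nsmul_eq_mul, nsmul_eq_mul, hcard, cast_card_offDiag]
  have hdev : |∑ uv ∈ univ.offDiag, ((τ uv.1 uv.2 : ℝ)
      - m * (b + if uv.1 ∈ E ∧ uv.2 ∈ E then Δ else 0))| ≤ N * (m * t) := by
    refine (abs_sum_le_sum_abs _ _).trans ?_
    rw [← hcard, ← nsmul_eq_mul]
    exact sum_le_card_nsmul _ _ _ fun uv huv => hτ _ _ (mem_offDiag.1 huv).2.2
  rw [sum_sub_distrib, hmean] at hdev
  have hrewrite : (∑ uv ∈ univ.offDiag, (τ uv.1 uv.2 : ℝ)) / N / m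
      - (b + Δ * (#E * (#E - 1) / N))
      = ((∑ uv ∈ univ.offDiag, (τ uv.1 uv.2 : ℝ)) - m * (N * b + #E * (#E - 1) * Δ))
        / (N * m) := by
    field_simp
  rw [hrewrite, abs_div, abs_of_pos (mul_pos hN hm'), div_le_iff₀ (mul_pos hN hm')]
  linarith

lemma empiricalRate_mem_Icc (hE : 2 ≤ #E) (hEuniv : E ≠ univ) (hm : 0 < m) {x : ℝ}
    (hx : 0 ≤ x) (hΔ : n ^ 2 * x ≤ Δ)
    (hτ : ∀ u v, u ≠ v → |(τ u v : ℝ) - m * (b + if u ∈ E ∧ v ∈ E then Δ else 0)| ≤ m * t) :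
    (∑ uv ∈ univ.offDiag, (τ uv.1 uv.2 : ℝ)) / (n * (n - 1)) / m
      ∈ Set.Icc (b + 2 * x - t) (b + Δ - 2 * n * x + t) := by
  have hkn : #E < n := by simpa using (card_lt_iff_ne_univ E).2 hEuniv
  have hn : (2 : ℝ) ≤ n := by exact_mod_cast hE.trans hkn.le
  have hdev := abs_le.1 (abs_empiricalRate_sub_le (by exact_mod_cast hn) hm hτ)
  set ρ : ℝ := #E * (#E - 1) / (n * (n - 1))
  have hρlo : 2 / (n : ℝ) ^ 2 ≤ ρ := two_div_sq_le_offDiag_ratio hE hkn.le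
  have hρhi : ρ ≤ 1 - 2 / n := offDiag_ratio_le_one_sub (by omega) hkn
  have hΔρlo : 2 * x ≤ Δ * ρ :=
    calc 2 * x = n ^ 2 * x * (2 / n ^ 2) := by field_simp
      _ ≤ Δ * ρ := mul_le_mul hΔ hρlo (by positivity) (by nlinarith)
  have hΔρhi : Δ * ρ ≤ Δ - 2 * n * x :=
    calc Δ * ρ ≤ Δ * (1 - 2 / n) := mul_le_mul_of_nonneg_left hρhi (by nlinarith)
      _ = Δ - 2 * (Δ / n) := by ring
      _ ≤ Δ - 2 * (n * x) := by
          gcongr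
          rw [le_div_iff₀ (by positivity)]
          nlinarith
      _ = Δ - 2 * n * x := by ring
  constructor <;> linarith [hdev.1, hdev.2]

lemma empiricalRate_le_one (hτm : ∀ u v, τ u v ≤ m) :
    (∑ uv ∈ univ.offDiag, (τ uv.1 uv.2 : ℝ)) / (n * (n - 1)) / m ≤ 1 := by
  have hcard : (#(univ : Finset (Fin n)).offDiag : ℝ) = n * (n - 1) := by
    rw [cast_card_offDiag, card_univ, Fintype.card_fin]
  rw [div_div]
  refine div_le_one_of_le₀ ?_ (by rw [← hcard]; positivity)
  calc ∑ uv ∈ univ.offDiag, (τ uv.1 uv.2 : ℝ) ≤ ∑ _uv ∈ (univ : Finset (Fin n)).offDiag, (m : ℝ) :=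
        sum_le_sum fun uv _ => by exact_mod_cast hτm _ _
    _ = n * (n - 1) * m := by rw [sum_const, nsmul_eq_mul, hcard]

end EmpiricalRate

lemma subset_of_inf'_le_inf' {V : Type*} [Fintype V] [DecidableEq V] {γ : V → V → ℝ}
    {E : Finset V} (hE : 2 ≤ #E) {A B : ℝ} (hB : 0 ≤ B)
    (hAB : (Fintype.card V - 1) * B < A) (hA : ∀ u ∈ E, ∀ v ∈ E, u ≠ v → A ≤ γ u v)
    (hBγ : ∀ u ∉ E, ∀ v, u ≠ v → γ u v ≤ B) {W : Finset V} (hW : W.Nonempty)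
    (hmax : ∀ (T : Finset V) (hT : T.Nonempty), T.inf' hT (fun u => ∑ v ∈ T.erase u, γ u v)
      ≤ W.inf' hW (fun u => ∑ v ∈ W.erase u, γ u v)) :
    W ⊆ E := by
  intro u₀ hu₀
  by_contra hu₀E
  have hEne : E.Nonempty := card_pos.1 (by omega)
  have hcard : (1 : ℝ) ≤ Fintype.card V := by exact_mod_cast Fintype.card_pos_iff.2 ⟨u₀⟩
  have hA0 : 0 ≤ A := by nlinarith
  have hexperts : A ≤ E.inf' hEne (fun u => ∑ v ∈ E.erase u, γ u v) := by
    refine le_inf' _ _ fun u hu => ?_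
    obtain ⟨v, hv⟩ : (E.erase u).Nonempty := by
      rw [← card_pos, card_erase_of_mem hu]
      omega
    have hγv : ∀ v ∈ E.erase u, A ≤ γ u v := fun v hv =>
      hA u hu v (mem_of_mem_erase hv) (ne_of_mem_erase hv).symm
    exact (hγv v hv).trans (single_le_sum (fun v hv => hA0.trans (hγv v hv)) hv)
  have hnonexpert : W.inf' hW (fun u => ∑ v ∈ W.erase u, γ u v) ≤ (Fintype.card V - 1) * B :=
    calc W.inf' hW (fun u => ∑ v ∈ W.erase u, γ u v) ≤ ∑ v ∈ W.erase u₀, γ u₀ v :=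
          inf'_le _ hu₀
      _ ≤ #(W.erase u₀) * B := by
          rw [← nsmul_eq_mul]
          exact sum_le_card_nsmul _ _ _ fun v hv => hBγ u₀ hu₀E v (ne_of_mem_erase hv).symm
      _ ≤ (Fintype.card V - 1) * B := by
          rw [card_erase_of_mem hu₀, Nat.cast_sub (card_pos.2 hW), Nat.cast_one]
          gcongr
          exact card_le_univ W
  linarith [hmax E hEne]

lemma subset_of_forall_abs_agreements_sub_le {n m : ℕ} {E : Finset (Fin n)} (hE : 2 ≤ #E)
    {b Δ x : ℝ} (hb : 0 ≤ b) (hx : 0 < x) (hΔ : n ^ 2 * x ≤ Δ) (hmx : 4 * log 2 ≤ m * x ^ 2)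
    {τ : Fin n → Fin n → ℕ} (hτm : ∀ u v, τ u v ≤ m)
    (hτ : ∀ u v, u ≠ v →
      |(τ u v : ℝ) - m * (b + if u ∈ E ∧ v ∈ E then Δ else 0)| ≤ m * (5 / 8 * x))
    {pemp : ℝ} (hpemp : pemp = (∑ uv ∈ univ.offDiag, (τ uv.1 uv.2 : ℝ)) / (n * (n - 1)) / m)
    {γ : Fin n → Fin n → ℝ} (hγ : ∀ u v, γ u v = -log (binomialTail m (τ u v) pemp))
    {deg : Finset (Fin n) → Fin n → ℝ} (hdeg : ∀ S u, deg S u = ∑ v ∈ S.erase u, γ u v)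
    {W : Finset (Fin n)} (hW : W.Nonempty)
    (hmax : ∀ (T : Finset (Fin n)) (hT : T.Nonempty), T.inf' hT (deg T) ≤ W.inf' hW (deg W)) :
    W ⊆ E := by
  obtain rfl : deg = fun S u => ∑ v ∈ S.erase u, γ u v := funext₂ hdeg
  rcases eq_or_ne E univ with rfl | hEuniv
  · exact subset_univ W
  have hn : (2 : ℝ) ≤ n := by
    exact_mod_cast hE.trans (card_le_univ E |>.trans_eq (Fintype.card_fin n))
  have hlog2 := Real.log_pos one_lt_two
  have hm : 0 < m := Nat.pos_of_ne_zero fun h => by simp [h] at hmx; linarith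
  have hrate := empiricalRate_mem_Icc hE hEuniv hm hx.le hΔ hτ
  have hpemp1 := empiricalRate_le_one hτm
  rw [← hpemp] at hrate hpemp1
  have hpemp0 : 0 < pemp := by linarith [hrate.1]
  refine subset_of_inf'_le_inf' (γ := γ) hE (A := 2 * m * (n * x) ^ 2) (B := log 2) hlog2.le
    ?_ (fun u hu v hv huv => ?_) (fun u hu v huv => ?_) hW hmax
  · rw [Fintype.card_fin]
    have h8 : (n : ℝ) - 1 < 8 * n ^ 2 := by nlinarith
    calc (n - 1) * log 2 < 8 * n ^ 2 * log 2 := mul_lt_mul_of_pos_right h8 hlog2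
      _ = 2 * n ^ 2 * (4 * log 2) := by ring
      _ ≤ 2 * n ^ 2 * (m * x ^ 2) := by gcongr
      _ = 2 * m * (n * x) ^ 2 := by ring
  -- An expert pair agrees at least `m (b + Δ - 5/8 x)` times, a margin `n x` above `m pemp`.
  · have hτuv := (abs_le.1 (hτ u v huv)).1
    rw [if_pos ⟨hu, hv⟩] at hτuv
    rw [hγ]
    refine le_neg_log_binomialTail hpemp0 hpemp1 (hτm u v) (by positivity) ?_
    have hnx : 2 * x ≤ n * x := by nlinarith
    have : pemp + n * x ≤ b + Δ - 5 / 8 * x := by linarith [hrate.2]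
    nlinarith
  -- Any other pair agrees at most `m (b + 5/8 x)` times, a margin `3/4 x` below `m pemp`.
  · have hτuv := (abs_le.1 (hτ u v huv)).2
    rw [if_neg fun h => hu h.1] at hτuv
    rw [hγ]
    refine neg_log_binomialTail_le_log_two hpemp0.le hpemp1 (h := 3 / 4 * x) (by positivity)
      (by nlinarith) ?_
    have : b + 5 / 8 * x ≤ pemp - 3 / 4 * x := by linarith [hrate.1]
    nlinarith

lemma one_sub_le_sum_ite_of_imp {ι : Type*} {s : Finset ι} {w : ι → ℝ} (hw : ∀ i ∈ s, 0 ≤ w i)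
    (hsum : ∑ i ∈ s, w i = 1) {G A : ι → Prop} [DecidablePred G] [DecidablePred A]
    (hGA : ∀ i, G i → A i) {ε : ℝ} (hbad : ∑ i ∈ s with ¬ G i, w i ≤ ε) :
    1 - ε ≤ ∑ i ∈ s, if A i then w i else 0 := by
  rw [← sum_filter_add_sum_filter_not s G] at hsum
  rw [← sum_filter]
  have : ∑ i ∈ s with G i, w i ≤ ∑ i ∈ s with A i, w i :=
    sum_le_sum_of_subset_of_nonneg (monotone_filter_right s fun i _ => hGA i)
      fun i hi _ => hw i (mem_filter.1 hi).1
  linarith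

lemma two_mul_le_mul_sq_of_div_le {n m : ℕ} (hn : 0 < n) {L δ : ℝ} (hδ : 0 < δ)
    (h : 2 * (n : ℝ) ^ 4 * L / δ ^ 4 ≤ m) : 2 * L ≤ m * (δ ^ 2 / n ^ 2) ^ 2 := by
  have hn' : (0 : ℝ) < n := by exact_mod_cast hn
  rw [div_le_iff₀ (by positivity)] at h
  calc 2 * L = 2 * n ^ 4 * L / n ^ 4 := by field_simp
    _ ≤ m * δ ^ 4 / n ^ 4 := by gcongr
    _ = m * (δ ^ 2 / n ^ 2) ^ 2 := by ring

lemma two_mul_log_two_le_log_sq_div {n : ℕ} (hn : 2 ≤ n) {ε : ℝ} (hε0 : 0 < ε) (hε1 : ε ≤ 1) :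
    2 * log 2 ≤ log ((n : ℝ) ^ 2 / ε) := by
  have hn' : (2 : ℝ) ≤ n := by exact_mod_cast hn
  calc 2 * log 2 = log (2 ^ 2) := by rw [log_pow]; norm_num
    _ ≤ log ((n : ℝ) ^ 2 / ε) :=
        log_le_log (by norm_num) (by rw [le_div_iff₀ hε0]; nlinarith)

lemma sq_mul_two_mul_exp_le {n m : ℕ} (hn : 2 ≤ n) {x ε : ℝ} (hε0 : 0 < ε) (hε1 : ε ≤ 1)
    (hmx : 2 * log ((n : ℝ) ^ 2 / ε) ≤ m * x ^ 2) :
    (n : ℝ) ^ 2 * (2 * exp (-(2 * m * (5 / 8 * x) ^ 2))) ≤ ε := by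
  set L := log ((n : ℝ) ^ 2 / ε)
  have hL := two_mul_log_two_le_log_sq_div hn hε0 hε1
  have hn0 : (0 : ℝ) < n := by exact_mod_cast (by omega : 0 < n)
  calc (n : ℝ) ^ 2 * (2 * exp (-(2 * m * (5 / 8 * x) ^ 2)))
      ≤ n ^ 2 * (2 * exp (-(L + log 2))) := by
        gcongr
        nlinarith
    _ = ε := by
        rw [neg_add, exp_add, exp_neg, exp_neg, exp_log (by positivity), exp_log two_pos]
        field_simp

open scoped Classical in
theorem stmt18_general (n m s : ℕ) (hs : 2 ≤ s)
    (E : Finset (Fin n)) (hE : 2 ≤ E.card)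
    (pex ε : ℝ) (hp : 1 / (s : ℝ) < pex) (hp1 : pex ≤ 1) (hε0 : 0 < ε) (hε1 : ε ≤ 1)
    (hmlarge : 2 * (n : ℝ) ^ 4 * Real.log ((n : ℝ) ^ 2 / ε) / (pex - 1 / s) ^ 4 ≤ (m : ℝ))
    (a : Fin m → Fin s)
    (f : Fin n → Fin m → Fin s → ℝ)
    (hf : ∀ w q c, f w q c =
      if w ∈ E then (if c = a q then pex else (1 - pex) / ((s : ℝ) - 1)) else 1 / (s : ℝ))
    (P : (Fin n → Fin m → Fin s) → ℝ)
    (hP : ∀ ω, P ω = ∏ w : Fin n, ∏ q : Fin m, f w q (ω w q))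
    (τ : (Fin n → Fin m → Fin s) → Fin n → Fin n → ℕ)
    (hτ : ∀ ω u v, τ ω u v = (Finset.univ.filter (fun q : Fin m => ω u q = ω v q)).card)
    (pemp : (Fin n → Fin m → Fin s) → ℝ)
    (hpemp : ∀ ω, pemp ω = (∑ q : Fin m,
        ((Finset.univ.filter
            (fun uv : Fin n × Fin n => uv.1 ≠ uv.2 ∧ ω uv.1 q = ω uv.2 q)).card : ℝ)
          / ((n : ℝ) * ((n : ℝ) - 1))) / (m : ℝ))
    (γ : (Fin n → Fin m → Fin s) → Fin n → Fin n → ℝ)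
    (hγ : ∀ ω u v, γ ω u v = -Real.log (∑ i ∈ Finset.Icc (τ ω u v) m,
        (m.choose i : ℝ) * (pemp ω) ^ i * (1 - pemp ω) ^ (m - i)))
    (deg : (Fin n → Fin m → Fin s) → Finset (Fin n) → Fin n → ℝ)
    (hdeg : ∀ ω S u, deg ω S u = ∑ v ∈ S.erase u, γ ω u v) :
    1 - ε ≤ ∑ ω : Fin n → Fin m → Fin s,
      (if ∀ (Wstar : Finset (Fin n)) (hW : Wstar.Nonempty),
            (∀ (T : Finset (Fin n)) (hT : T.Nonempty),
              T.inf' hT (deg ω T) ≤ Wstar.inf' hW (deg ω Wstar)) →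
            Wstar ⊆ E
        then P ω else 0) := by
  obtain rfl : f = answerLaw E a pex := funext fun w => funext₂ (hf w)
  have hn : 2 ≤ n := hE.trans (card_le_univ E |>.trans_eq (Fintype.card_fin n))
  have hs' : (2 : ℝ) ≤ s := by exact_mod_cast hs
  have hδ : 0 < pex - 1 / s := by linarith
  have hp0 : 0 ≤ pex := (one_div_pos.2 (by linarith : (0 : ℝ) < s)).le.trans hp.le
  set x := (pex - 1 / s) ^ 2 / n ^ 2
  have hmx := two_mul_le_mul_sq_of_div_le (by omega) hδ hmlarge
  have hP0 : ∀ ω, 0 ≤ P ω := fun ω =>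
    hP ω ▸ prod_nonneg fun w _ => prod_nonneg fun q _ => answerLaw_nonneg hs hp0 hp1 w q _
  have hPGF : ∀ u v, u ≠ v → HasBinomialPGF univ P (τ · u v) m (agreementProb E s pex u v) :=
    fun u v huv r => by simpa only [hP, hτ] using hasBinomialPGF_answerLaw hs huv r
  obtain ⟨u₀, -, v₀, -, huv₀⟩ := one_lt_card.1 hE
  refine one_sub_le_sum_ite_of_imp (fun ω _ => hP0 ω) (hPGF u₀ v₀ huv₀).sum_eq_one
    (fun ω hω W hW hmax => ?_) ((sum_filter_not_forall_abs_sub_le (fun ω _ => hP0 ω)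
      (agreementProb_mem_Icc hs hp0 hp1) hPGF (t := 5 / 8 * x) (by positivity)).trans ?_)
  · have hΔ : (n : ℝ) ^ 2 * x ≤ (pex - 1 / s) ^ 2 * s / (s - 1) := by
      rw [mul_div_cancel₀ _ (by positivity), le_div_iff₀ (by linarith)]
      nlinarith [sq_nonneg (pex - 1 / s)]
    have hτm : ∀ u v, τ ω u v ≤ m := fun u v =>
      (hτ ω u v).trans_le ((card_filter_le _ _).trans_eq (card_fin m))
    have hpemp' : pemp ω = (∑ uv ∈ univ.offDiag, (τ ω uv.1 uv.2 : ℝ)) / (n * (n - 1)) / m := by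
      rw [hpemp, ← sum_div, ← Nat.cast_sum, sum_card_agreeing_pairs, Nat.cast_sum]
      simp only [hτ]
    exact subset_of_forall_abs_agreements_sub_le hE (by positivity) (by positivity) hΔ
      (by linarith [two_mul_log_two_le_log_sq_div hn hε0 hε1]) hτm hω hpemp' (hγ ω) (hdeg ω)
      hW hmax
  · rw [Fintype.card_fin]
    exact sq_mul_two_mul_exp_le hn hε0 hε1 hmx

open scoped Classical in
/-- Expert-core correctness: with n workers (a set E of at least two experts answering
correctly with probability p_ex > 1/s, others uniform) answering m questions with s
candidates each, if m ≥ 2n⁴ log(n²/ε)/(p_ex - 1/s)⁴ then with probability at least 1 - ε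
every maximin-weighted-degree subset (expert core) contains only experts. -/
theorem stmt18 (n m s : ℕ) (hs : 2 ≤ s) (hn : 0 < n) (hm : 0 < m)
    (E : Finset (Fin n)) (hE : 2 ≤ E.card)
    (pex ε : ℝ) (hp : 1 / (s : ℝ) < pex) (hp1 : pex ≤ 1) (hε0 : 0 < ε) (hε1 : ε ≤ 1)
    (hmlarge : 2 * (n : ℝ) ^ 4 * Real.log ((n : ℝ) ^ 2 / ε) / (pex - 1 / s) ^ 4 ≤ (m : ℝ))
    (a : Fin m → Fin s)
    (f : Fin n → Fin m → Fin s → ℝ)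
    (hf : ∀ w q c, f w q c =
      if w ∈ E then (if c = a q then pex else (1 - pex) / ((s : ℝ) - 1)) else 1 / (s : ℝ))
    (P : (Fin n → Fin m → Fin s) → ℝ)
    (hP : ∀ ω, P ω = ∏ w : Fin n, ∏ q : Fin m, f w q (ω w q))
    (τ : (Fin n → Fin m → Fin s) → Fin n → Fin n → ℕ)
    (hτ : ∀ ω u v, τ ω u v = (Finset.univ.filter (fun q : Fin m => ω u q = ω v q)).card)
    (pemp : (Fin n → Fin m → Fin s) → ℝ)
    (hpemp : ∀ ω, pemp ω = (∑ q : Fin m,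
        ((Finset.univ.filter
            (fun uv : Fin n × Fin n => uv.1 ≠ uv.2 ∧ ω uv.1 q = ω uv.2 q)).card : ℝ)
          / ((n : ℝ) * ((n : ℝ) - 1))) / (m : ℝ))
    (γ : (Fin n → Fin m → Fin s) → Fin n → Fin n → ℝ)
    (hγ : ∀ ω u v, γ ω u v = -Real.log (∑ i ∈ Finset.Icc (τ ω u v) m,
        (m.choose i : ℝ) * (pemp ω) ^ i * (1 - pemp ω) ^ (m - i)))
    (deg : (Fin n → Fin m → Fin s) → Finset (Fin n) → Fin n → ℝ)
    (hdeg : ∀ ω S u, deg ω S u = ∑ v ∈ S.erase u, γ ω u v) :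
    1 - ε ≤ ∑ ω : Fin n → Fin m → Fin s,
      (if ∀ (Wstar : Finset (Fin n)) (hW : Wstar.Nonempty),
            (∀ (T : Finset (Fin n)) (hT : T.Nonempty),
              T.inf' hT (deg ω T) ≤ Wstar.inf' hW (deg ω Wstar)) →
            Wstar ⊆ E
        then P ω else 0) :=
  stmt18_general n m s hs E hE pex ε hp hp1 hε0 hε1 hmlarge a f hf P hP τ hτ pemp hpemp γ hγ deg
    hdeg
end
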